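/- arXiv:1401.2638 — 3 statements merged into one kernel-verified Lean document; each statement's English description precedes it below -/
import Mathlib

section
/- Suppose a word-hyperbolic group G acts on a compact metrizable space Z as a non-elementary convergence group, i : ∂G → Z is a Cannon–Thurston map, and z ∈ i(∂G). Then z is not a conical limit point for the action of G on Z if and only if some x ∈ i^{-1}(z) is asymptotic to L_i. -/
open Filter Topology Metric Pointwise

/-- The maps `z ↦ g n • z` converge to the constant map with value `b`, uniformly on
compact subsets of `Z` avoiding the point `a` (i.e. locally uniformly on `Z \ {a}`). -/
def ConvLocUnif {G Z : Type*} [Group G] [MetricSpace Z] [MulAction G Z]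
    (g : ℕ → G) (a b : Z) : Prop :=
  ∀ K : Set Z, IsCompact K → a ∉ K →
    TendstoUniformlyOn (fun n z => g n • z) (fun _ => b) atTop K

/-- The action of `G` on the compact metrizable space `Z` is a convergence action: it is an
action by homeomorphisms such that every injective sequence in `G` has a subsequence
converging locally uniformly, away from one point `a`, to a constant map with value `b`. -/
def IsConvergenceAction (G Z : Type*) [Group G] [MetricSpace Z] [MulAction G Z] : Prop :=
  (∀ g : G, Continuous fun z : Z => g • z) ∧
  ∀ g : ℕ → G, Function.Injective g →
    ∃ (a b : Z) (φ : ℕ → ℕ), StrictMono φ ∧ ConvLocUnif (fun k => g (φ k)) a b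

/-- `g` is a conical sequence for `z` with pole pair `(zm, zp)`. -/
def IsConicalSeq {G Z : Type*} [Group G] [MetricSpace Z] [MulAction G Z]
    (g : ℕ → G) (z zm zp : Z) : Prop :=
  Function.Injective g ∧ zm ≠ zp ∧
    Tendsto (fun n => g n • z) atTop (𝓝 zp) ∧ ConvLocUnif g z zm

/-- `z` is a conical limit point for the action of `G` on `Z`. -/
def IsConicalLimitPoint (G : Type*) {Z : Type*} [Group G] [MetricSpace Z] [MulAction G Z]
    (z : Z) : Prop :=
  ∃ (g : ℕ → G) (zm zp : Z), IsConicalSeq g z zm zp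

/-- `g` is a conical sequence for `z` with pole pair `(zm, zp)`, for the restricted
action of `G` on an invariant subset `Z' ⊆ Z`. -/
def IsConicalSeqOn {G Z : Type*} [Group G] [MetricSpace Z] [MulAction G Z]
    (Z' : Set Z) (g : ℕ → G) (z zm zp : Z) : Prop :=
  zm ∈ Z' ∧ zp ∈ Z' ∧ Function.Injective g ∧ zm ≠ zp ∧
    Tendsto (fun n => g n • z) atTop (𝓝 zp) ∧
    ∀ K : Set Z, IsCompact K → K ⊆ Z' → z ∉ K →
      TendstoUniformlyOn (fun n w => g n • w) (fun _ => zm) atTop K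

/-- `z` is a conical limit point for the restricted action of `G` on `Z' ⊆ Z`. -/
def IsConicalLimitPointOn (G : Type*) {Z : Type*} [Group G] [MetricSpace Z] [MulAction G Z]
    (Z' : Set Z) (z : Z) : Prop :=
  ∃ (g : ℕ → G) (zm zp : Z), IsConicalSeqOn Z' g z zm zp

/-- The action of `G` on `Z` is elementary: `G` is finite or there is a nonempty invariant
subset of cardinality at most 2. -/
def IsElementaryAction (G Z : Type*) [Group G] [MetricSpace Z] [MulAction G Z] : Prop :=
  Finite G ∨ ∃ S : Set Z, S.Nonempty ∧ S.encard ≤ 2 ∧ ∀ g : G, g • S = S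

/-- A Cannon–Thurston map: a continuous `G`-equivariant map from the boundary `B = ∂G` to `Z`. -/
def IsCannonThurston (G : Type*) {B Z : Type*} [Group G] [MetricSpace B] [MulAction G B]
    [MetricSpace Z] [MulAction G Z] (i : B → Z) : Prop :=
  Continuous i ∧ ∀ (g : G) (x : B), i (g • x) = g • i x

/-- `B` is (a realization of) the Gromov boundary of the word-hyperbolic group `G`:
the action of `G` on `B` is a convergence action in which every point is conical
(a uniform convergence action), which by Bowditch's theorem characterizes
word-hyperbolic groups acting on their Gromov boundary. -/
def IsHypBoundary (G B : Type*) [Group G] [MetricSpace B] [CompactSpace B]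
    [MulAction G B] : Prop :=
  IsConvergenceAction G B ∧ ∀ x : B, IsConicalLimitPoint G x

/-- `g` acts loxodromically on `Z` with repelling point `am` and attracting point `ap`. -/
def IsLoxodromicOn {G Z : Type*} [Group G] [MetricSpace Z] [MulAction G Z]
    (g : G) (am ap : Z) : Prop :=
  ¬ IsOfFinOrder g ∧ am ≠ ap ∧ {z : Z | g • z = z} = {am, ap} ∧
    (∀ K : Set Z, IsCompact K → am ∉ K →
      TendstoUniformlyOn (fun (n : ℕ) z => g ^ n • z) (fun _ => ap) atTop K) ∧
    (∀ K : Set Z, IsCompact K → ap ∉ K →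
      TendstoUniformlyOn (fun (n : ℕ) z => g⁻¹ ^ n • z) (fun _ => am) atTop K)

/-- `g` acts parabolically on `Z`: it has infinite order and exactly one fixed point. -/
def IsParabolicOn {G : Type*} (Z : Type*) [Group G] [MetricSpace Z] [MulAction G Z]
    (g : G) : Prop :=
  ¬ IsOfFinOrder g ∧ ∃ a : Z, {z : Z | g • z = z} = {a}

/-- `x ∈ ∂G` is asymptotic to the lamination `L_i`: for every conical sequence for `x`
with pole pair `(xm, xp)` one has `i xm = i xp`. -/
def AsymptoticTo (G : Type*) {B Z : Type*} [Group G] [MetricSpace B] [MulAction G B]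
    [MetricSpace Z] [MulAction G Z] (i : B → Z) (x : B) : Prop :=
  ∀ (g : ℕ → G) (xm xp : B), IsConicalSeq g x xm xp → i xm = i xp

/-!
The two directions rest on one observation: when a sequence `gₙ` converges locally uniformly
both on `∂G` (poles `a', b'`) and on `Z` (poles `a, b`), then `b = i b'`, because the
non-elementary action lets us test both limits on a point `i y` avoiding `a` and `i a'`.
If `x` has a conical sequence whose poles are not identified by `i`, a subsequence of it is
conical for `i x`. Conversely, a conical sequence for `z = i x` has a subsequence converging on
`∂G` and at `x`; comparing poles, either `x` is not a repelling pole and the poles in `Z`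
coincide, or it is and asymptoticity of `x` identifies them.
-/

lemma smul_range_eq_of_equivariant {G B Z : Type*} [Group G] [MulAction G B] [MulAction G Z]
    {i : B → Z} (hi : ∀ (g : G) (x : B), i (g • x) = g • i x)
    (g : G) : g • Set.range i = Set.range i := by
  rw [Set.smul_set_range]
  simp_rw [← hi]
  exact (MulAction.surjective g).range_comp i

lemma exists_apply_ne_ne_of_not_isElementaryAction {G B Z : Type*} [Group G] [MulAction G B]
    [MetricSpace Z] [MulAction G Z] [Nonempty B]
    (hZne : ¬ IsElementaryAction G Z) {i : B → Z} (hi : ∀ (g : G) (x : B), i (g • x) = g • i x)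
    (u v : Z) : ∃ y : B, i y ≠ u ∧ i y ≠ v := by
  by_contra! hcon
  refine hZne (Or.inr ⟨Set.range i, Set.range_nonempty i, ?_, smul_range_eq_of_equivariant hi⟩)
  have hsub : Set.range i ⊆ {u, v} := by
    rintro _ ⟨y, rfl⟩
    by_cases hy : i y = u
    · exact Or.inl hy
    · exact Or.inr (hcon y hy)
  calc (Set.range i).encard ≤ ({u, v} : Set Z).encard := Set.encard_le_encard hsub
    _ ≤ ({v} : Set Z).encard + 1 := Set.encard_insert_le {v} u
    _ = 2 := by rw [Set.encard_singleton]; rfl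

section ConvergenceActions

variable {G B Z : Type*} [Group G] [MetricSpace B] [MulAction G B]
    [MetricSpace Z] [MulAction G Z]

lemma ConvLocUnif.comp_strictMono {g : ℕ → G} {a b : Z} (h : ConvLocUnif g a b)
    {φ : ℕ → ℕ} (hφ : StrictMono φ) : ConvLocUnif (fun k => g (φ k)) a b :=
  fun K hK haK u hu => hφ.tendsto_atTop.eventually (h K hK haK u hu)

lemma ConvLocUnif.tendsto_smul {g : ℕ → G} {a b : Z} (h : ConvLocUnif g a b)
    {w : Z} (hw : w ≠ a) : Tendsto (fun n => g n • w) atTop (𝓝 b) :=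
  (h {w} isCompact_singleton (by simpa using hw.symm)).tendsto_at rfl

lemma IsCannonThurston.tendsto_smul {i : B → Z} (hi : IsCannonThurston G i) {g : ℕ → G}
    {x y : B} (h : Tendsto (fun n => g n • x) atTop (𝓝 y)) :
    Tendsto (fun n => g n • i x) atTop (𝓝 (i y)) := by
  simpa only [Function.comp_def, hi.2] using (hi.1.tendsto y).comp h

lemma ConvLocUnif.eq_apply_of_convLocUnif (hZne : ¬ IsElementaryAction G Z) {i : B → Z}
    (hi : IsCannonThurston G i) {g : ℕ → G} {a' b' : B} {a b : Z}
    (hB : ConvLocUnif g a' b') (hZ : ConvLocUnif g a b) : b = i b' := by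
  have : Nonempty B := ⟨a'⟩
  obtain ⟨y, hya, hya'⟩ := exists_apply_ne_ne_of_not_isElementaryAction hZne hi.2 a (i a')
  have hy : y ≠ a' := fun h => hya' (congrArg i h)
  exact tendsto_nhds_unique (hZ.tendsto_smul hya) (hi.tendsto_smul (hB.tendsto_smul hy))

lemma IsConicalSeq.isConicalLimitPoint_apply (hZ : IsConvergenceAction G Z)
    (hZne : ¬ IsElementaryAction G Z) {i : B → Z} (hi : IsCannonThurston G i) {g : ℕ → G}
    {x xm xp : B} (hg : IsConicalSeq g x xm xp) (hne : i xm ≠ i xp) :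
    IsConicalLimitPoint G (i x) := by
  obtain ⟨hginj, -, hlim, hconvB⟩ := hg
  obtain ⟨a, b, φ, hφ, hconvZ⟩ := hZ.2 g hginj
  have hb : b = i xm := (hconvB.comp_strictMono hφ).eq_apply_of_convLocUnif hZne hi hconvZ
  have hlimZ : Tendsto (fun k => g (φ k) • i x) atTop (𝓝 (i xp)) :=
    hi.tendsto_smul (hlim.comp hφ.tendsto_atTop)
  have ha : a = i x := by
    by_contra ha
    exact hne (hb ▸ tendsto_nhds_unique (hconvZ.tendsto_smul (Ne.symm ha)) hlimZ)
  exact ⟨_, _, _, hginj.comp hφ.injective, hne, hlimZ, ha ▸ hb ▸ hconvZ⟩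

lemma AsymptoticTo.not_isConicalLimitPoint [CompactSpace B] (hB : IsConvergenceAction G B)
    (hZne : ¬ IsElementaryAction G Z) {i : B → Z} (hi : IsCannonThurston G i) {x : B}
    (hx : AsymptoticTo G i x) : ¬ IsConicalLimitPoint G (i x) := by
  rintro ⟨g, zm, zp, hginj, hne, hlim, hconvZ⟩
  obtain ⟨a', b', φ, hφ, hconvB⟩ := hB.2 g hginj
  obtain ⟨xp, -, ψ, hψ, hxp⟩ :=
    isCompact_univ.tendsto_subseq (x := fun k => g (φ k) • x) (fun _ => Set.mem_univ _)
  set h : ℕ → G := fun n => g (φ (ψ n))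
  have hconvB' : ConvLocUnif h a' b' := hconvB.comp_strictMono hψ
  have hzm : zm = i b' :=
    hconvB'.eq_apply_of_convLocUnif hZne hi (hconvZ.comp_strictMono (hφ.comp hψ))
  have hzp : i xp = zp :=
    tendsto_nhds_unique (hi.tendsto_smul hxp) (hlim.comp (hφ.comp hψ).tendsto_atTop)
  refine hne (hzm.trans (Eq.trans ?_ hzp))
  rcases eq_or_ne a' x with rfl | ha'
  · by_cases hb' : b' = xp
    · rw [hb']
    · exact hx h b' xp ⟨hginj.comp (hφ.injective.comp hψ.injective), hb', hxp, hconvB'⟩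
  · rw [tendsto_nhds_unique (hconvB'.tendsto_smul (Ne.symm ha')) hxp]

end ConvergenceActions

theorem stmt6_general {G B Z : Type*} [Group G] [MetricSpace B] [CompactSpace B] [MulAction G B]
    [MetricSpace Z] [MulAction G Z]
    (hB : IsHypBoundary G B)
    (hZ : IsConvergenceAction G Z) (hZne : ¬ IsElementaryAction G Z)
    (i : B → Z) (hi : IsCannonThurston G i)
    (z : Z) (hz : z ∈ Set.range i) :
    ¬ IsConicalLimitPoint G z ↔ ∃ x : B, i x = z ∧ AsymptoticTo G i x := by
  obtain ⟨x₀, rfl⟩ := hz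
  constructor
  · intro hnc
    exact ⟨x₀, rfl, fun g xm xp hg =>
      by_contra fun hne => hnc (hg.isConicalLimitPoint_apply hZ hZne hi hne)⟩
  · rintro ⟨x, hx, hasym⟩
    rw [← hx]
    exact hasym.not_isConicalLimitPoint hB.1 hZne hi

/-- (Theorem A(1)) For `z ∈ i(∂G)`, `z` is not a conical limit point for
the action of `G` on `Z` iff some `x ∈ i⁻¹(z)` is asymptotic to the lamination `L_i`. -/
theorem stmt6 {G B Z : Type*} [Group G] [MetricSpace B] [CompactSpace B] [MulAction G B]
    [MetricSpace Z] [CompactSpace Z] [MulAction G Z]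
    (hB : IsHypBoundary G B)
    (hZ : IsConvergenceAction G Z) (hZne : ¬ IsElementaryAction G Z)
    (i : B → Z) (hi : IsCannonThurston G i)
    (z : Z) (hz : z ∈ Set.range i) :
    ¬ IsConicalLimitPoint G z ↔ ∃ x : B, i x = z ∧ AsymptoticTo G i x :=
  stmt6_general hB hZ hZne i hi z hz
end

section
/- Suppose G is a word-hyperbolic group acting on a compact metrizable space Z as a non-elementary convergence group, i : ∂G → Z is a Cannon–Thurston map, and x ∈ ∂G is a controlled concentration point with |i^{-1}(i(x))| = 1. Then i(x) is a conical limit point for the action of G on Z. -/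
/-!
Pass to a subsequence of the controlling sequence `gₙ` that converges on `Z` with poles
`(a, b)`. Through the equivariant map `i`, it sends `i x` to `i x` in the limit and every
other `i v` to `i y ≠ i x`. If `a ≠ i x`, then `b = i x`, which forces `i v = a` for all
`v ≠ x`; the range of `i` would then be an invariant set of at most two points, contradicting
non-elementarity. So `a = i x`, and evaluating at `y` gives `b = i y`.
-/

open Filter Topology Metric Pointwise

/-- `x` is a controlled concentration point for the action of `G` on its boundary `B`. -/
def IsControlledConcentrationPoint (G : Type*) {B : Type*} [Group G] [MetricSpace B]
    [MulAction G B] (x : B) : Prop :=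
  ∃ (g : ℕ → G) (y : B), Function.Injective g ∧ y ≠ x ∧
    Tendsto (fun n => g n • x) atTop (𝓝 x) ∧ ConvLocUnif g x y

namespace ConvLocUnif

variable {G Z : Type*} [Group G] [MetricSpace Z] [MulAction G Z] {g : ℕ → G} {a b : Z}

theorem tendsto_smul_s15 (h : ConvLocUnif g a b) {z : Z} (hz : z ≠ a) :
    Tendsto (fun n => g n • z) atTop (𝓝 b) := by
  simpa using (h {z} isCompact_singleton (by simpa using hz.symm)).tendsto_at rfl

theorem eq_of_tendsto_smul (h : ConvLocUnif g a b) {z c : Z} (hz : z ≠ a)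
    (hc : Tendsto (fun n => g n • z) atTop (𝓝 c)) : b = c :=
  tendsto_nhds_unique (h.tendsto_smul_s15 hz) hc

end ConvLocUnif

namespace IsCannonThurston

variable {G B Z : Type*} [Group G] [MetricSpace B] [MulAction G B] [MetricSpace Z]
  [MulAction G Z] {i : B → Z}

theorem tendsto_smul_s15 (hi : IsCannonThurston G i) {g : ℕ → G} {v w : B}
    (h : Tendsto (fun n => g n • v) atTop (𝓝 w)) :
    Tendsto (fun n => g n • i v) atTop (𝓝 (i w)) := by
  simpa only [Function.comp_def, hi.2] using (hi.1.tendsto w).comp h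

theorem smul_range (hi : IsCannonThurston G i) (g : G) : g • Set.range i = Set.range i := by
  ext z
  simp only [Set.mem_smul_set, Set.mem_range]
  constructor
  · rintro ⟨_, ⟨v, rfl⟩, rfl⟩
    exact ⟨g • v, hi.2 g v⟩
  · rintro ⟨v, rfl⟩
    exact ⟨i (g⁻¹ • v), ⟨_, rfl⟩, by rw [hi.2, smul_inv_smul]⟩

theorem isElementaryAction_of_range_subset_pair [Nonempty B] (hi : IsCannonThurston G i)
    {p q : Z} (h : Set.range i ⊆ {p, q}) : IsElementaryAction G Z :=
  Or.inr ⟨Set.range i, Set.range_nonempty i,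
    (Set.encard_le_encard h).trans <| (Set.encard_insert_le _ _).trans_eq <| by
      rw [Set.encard_singleton, one_add_one_eq_two], hi.smul_range⟩

end IsCannonThurston

theorem stmt15_general {G B Z : Type*} [Group G] [MetricSpace B] [MulAction G B]
    [MetricSpace Z] [MulAction G Z]
    (hZ : IsConvergenceAction G Z) (hZne : ¬ IsElementaryAction G Z)
    (i : B → Z) (hi : IsCannonThurston G i)
    (x : B) (hccp : IsControlledConcentrationPoint G x)
    (huniq : ∀ x' : B, i x' = i x → x' = x) :
    IsConicalLimitPoint G (i x) := by
  obtain ⟨g, y, hg, hyx, hgx, hgy⟩ := hccp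
  obtain ⟨a, b, φ, hφ, hab⟩ := hZ.2 g hg
  have hx : Tendsto (fun k => g (φ k) • i x) atTop (𝓝 (i x)) :=
    hi.tendsto_smul_s15 (hgx.comp hφ.tendsto_atTop)
  have hy : ∀ v ≠ x, Tendsto (fun k => g (φ k) • i v) atTop (𝓝 (i y)) := fun v hv =>
    hi.tendsto_smul_s15 ((hgy.tendsto_smul_s15 hv).comp hφ.tendsto_atTop)
  have hiy : i y ≠ i x := fun h => hyx (huniq y h)
  have ha : a = i x := by
    by_contra ha
    have hb : b = i x := hab.eq_of_tendsto_smul (Ne.symm ha) hx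
    have : Nonempty B := ⟨x⟩
    refine hZne (hi.isElementaryAction_of_range_subset_pair (p := i x) (q := a) ?_)
    rintro _ ⟨v, rfl⟩
    by_cases hv : v = x
    · exact Or.inl (congrArg i hv)
    · by_cases hva : i v = a
      · exact Or.inr hva
      · exact absurd (hab.eq_of_tendsto_smul hva (hy v hv) ▸ hb) hiy
  have hb : b = i y := hab.eq_of_tendsto_smul (ha ▸ hiy) (hy y hyx)
  subst ha hb
  exact ⟨_, _, _, hg.comp hφ.injective, hiy, hx, hab⟩

/-- If a word-hyperbolic group `G` (with Gromov boundary `B`) acts on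
compact metrizable `Z` as a non-elementary convergence group with Cannon–Thurston map `i`,
and `x ∈ B` is a controlled concentration point with `|i⁻¹(i x)| = 1`, then `i x` is a
conical limit point for the action of `G` on `Z`. -/
theorem stmt15 {G B Z : Type*} [Group G] [MetricSpace B] [CompactSpace B] [MulAction G B]
    [MetricSpace Z] [CompactSpace Z] [MulAction G Z]
    (hB : IsHypBoundary G B)
    (hZ : IsConvergenceAction G Z) (hZne : ¬ IsElementaryAction G Z)
    (i : B → Z) (hi : IsCannonThurston G i)
    (x : B) (hccp : IsControlledConcentrationPoint G x)
    (huniq : ∀ x' : B, i x' = i x → x' = x) :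
    IsConicalLimitPoint G (i x) :=
  stmt15_general hZ hZne i hi x hccp huniq
end

section
/- Let G be a word-hyperbolic group acting as a non-elementary convergence group on a compact metrizable space Z. Then a G-limit point z ∈ Z is a conical limit point if and only if for every point s ∈ Z with s ≠ z there exist an infinite sequence (g_n) of distinct elements of G and points s_∞, z_∞ ∈ Z with s_∞ ≠ z_∞ such that g_n z → z_∞ and g_n s → s_∞. -/
open Filter Topology Metric Pointwise

/-
A conical sequence for `z` sends every `s ≠ z` to the repelling pole, so the
limits of `z` and `s` are the two distinct poles. Conversely, pick `γ` with `γ • z ≠ z`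
(a global fixed point would make the action elementary) and a sequence separating `z` from
`s = γ • z`. Pass to a convergence subsequence with poles `a, b`: if neither `z` nor `s` were
`a`, both would be sent to `b`. So `z = a` and the subsequence is conical for `z`, or `s = a`
and, after right multiplication by `γ`, it is conical for `z`.
-/

section Conical

variable {G Z : Type*} [Group G] [MetricSpace Z] [MulAction G Z]

theorem ConvLocUnif.tendsto_smul_of_ne {g : ℕ → G} {a b w : Z} (h : ConvLocUnif g a b)
    (hw : w ≠ a) : Tendsto (fun n => g n • w) atTop (𝓝 b) :=
  (h {w} isCompact_singleton (by simpa using hw.symm)).tendsto_at rfl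

theorem ConvLocUnif.mul_right {g : ℕ → G} {γ : G} {a b : Z}
    (hγ : Continuous fun w : Z => γ • w) (h : ConvLocUnif g (γ • a) b) :
    ConvLocUnif (fun n => g n * γ) a b := by
  intro K hK haK
  have hγK : γ • a ∉ (γ • ·) '' K := by
    rintro ⟨w, hwK, hw⟩
    exact haK (MulAction.injective γ hw ▸ hwK)
  simpa [Function.comp_def, mul_smul] using
    ((h _ (hK.image hγ) hγK).comp (γ • ·)).mono (Set.subset_preimage_image _ K)

theorem IsConicalSeq.tendsto_smul_of_ne {g : ℕ → G} {z zm zp s : Z}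
    (h : IsConicalSeq g z zm zp) (hs : s ≠ z) : Tendsto (fun n => g n • s) atTop (𝓝 zm) :=
  h.2.2.2.tendsto_smul_of_ne hs

theorem IsConicalSeq.mul_right {g : ℕ → G} {γ : G} {z zm zp : Z}
    (hγ : Continuous fun w : Z => γ • w) (h : IsConicalSeq g (γ • z) zm zp) :
    IsConicalSeq (fun n => g n * γ) z zm zp := by
  obtain ⟨hinj, hmp, hz, hconv⟩ := h
  exact ⟨fun j k hjk => hinj (mul_right_cancel hjk), hmp, by simpa [mul_smul] using hz,
    hconv.mul_right hγ⟩

theorem ConvLocUnif.isConicalSeq {g : ℕ → G} {a b w p q : Z} (h : ConvLocUnif g a b)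
    (hinj : Function.Injective g) (ha : Tendsto (fun n => g n • a) atTop (𝓝 p))
    (hw : Tendsto (fun n => g n • w) atTop (𝓝 q)) (hqp : q ≠ p) : IsConicalSeq g a b p := by
  have hwa : w ≠ a := by
    rintro rfl
    exact hqp (tendsto_nhds_unique hw ha)
  exact ⟨hinj, tendsto_nhds_unique (h.tendsto_smul_of_ne hwa) hw ▸ hqp, ha, h⟩

theorem IsConvergenceAction.isConicalLimitPoint_of_tendsto (hZ : IsConvergenceAction G Z)
    {g : ℕ → G} (hinj : Function.Injective g) {γ : G} {z zinf sinf : Z}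
    (hz : Tendsto (fun n => g n • z) atTop (𝓝 zinf))
    (hs : Tendsto (fun n => g n • γ • z) atTop (𝓝 sinf)) (hsz : sinf ≠ zinf) :
    IsConicalLimitPoint G z := by
  obtain ⟨a, b, φ, hφ, hconv⟩ := hZ.2 g hinj
  have hinj' := hinj.comp hφ.injective
  have hz' := hz.comp hφ.tendsto_atTop
  have hs' := hs.comp hφ.tendsto_atTop
  by_cases hza : z = a
  · subst hza
    exact ⟨_, _, _, hconv.isConicalSeq hinj' hz' hs' hsz⟩
  by_cases hsa : γ • z = a
  · subst hsa
    exact ⟨_, _, _, (hconv.isConicalSeq hinj' hs' hz' hsz.symm).mul_right (hZ.1 γ)⟩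
  exact absurd ((tendsto_nhds_unique hs' (hconv.tendsto_smul_of_ne hsa)).trans
    (tendsto_nhds_unique hz' (hconv.tendsto_smul_of_ne hza)).symm) hsz

theorem exists_smul_ne_of_not_isElementaryAction (hne : ¬ IsElementaryAction G Z) (z : Z) :
    ∃ γ : G, γ • z ≠ z := by
  by_contra! h
  exact hne (Or.inr ⟨{z}, Set.singleton_nonempty z, by simp, fun g => by
    rw [Set.smul_set_singleton, h g]⟩)

end Conical

theorem stmt16_general {G Z : Type*} [Group G]
    [MetricSpace Z] [MulAction G Z]
    (hZ : IsConvergenceAction G Z) (hne : ¬ IsElementaryAction G Z)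
    (z : Z) :
    IsConicalLimitPoint G z ↔
      ∀ s : Z, s ≠ z → ∃ (g : ℕ → G) (sinf zinf : Z), Function.Injective g ∧ sinf ≠ zinf ∧
        Tendsto (fun n => g n • z) atTop (𝓝 zinf) ∧
        Tendsto (fun n => g n • s) atTop (𝓝 sinf) := by
  constructor
  · rintro ⟨g, zm, zp, hc⟩ s hs
    exact ⟨g, zm, zp, hc.1, hc.2.1, hc.2.2.1, hc.tendsto_smul_of_ne hs⟩
  · intro H
    obtain ⟨γ, hγ⟩ := exists_smul_ne_of_not_isElementaryAction hne z
    obtain ⟨g, sinf, zinf, hinj, hsz, hz, hs⟩ := H (γ • z) hγ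
    exact hZ.isConicalLimitPoint_of_tendsto hinj hz hs hsz

/-- Let the word-hyperbolic group `G` (with Gromov boundary `B`) act as a
non-elementary convergence group on compact metrizable `Z`, and let `z` be a point of the
limit set `Λ` (the unique minimal nonempty closed `G`-invariant subset of `Z`). Then `z` is
a conical limit point iff for every `s ≠ z` there exist a sequence of distinct elements
`g n ∈ G` and points `s∞ ≠ z∞` with `g n • z → z∞` and `g n • s → s∞`. -/
theorem stmt16 {G B Z : Type*} [Group G] [MetricSpace B] [CompactSpace B] [MulAction G B]
    [MetricSpace Z] [CompactSpace Z] [MulAction G Z]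
    (hB : IsHypBoundary G B)
    (hZ : IsConvergenceAction G Z) (hne : ¬ IsElementaryAction G Z)
    (Λ : Set Z) (hΛne : Λ.Nonempty) (hΛcl : IsClosed Λ) (hΛinv : ∀ g : G, g • Λ = Λ)
    (hΛmin : ∀ C : Set Z, C.Nonempty → IsClosed C → (∀ g : G, g • C = C) → Λ ⊆ C)
    (z : Z) (hz : z ∈ Λ) :
    IsConicalLimitPoint G z ↔
      ∀ s : Z, s ≠ z → ∃ (g : ℕ → G) (sinf zinf : Z), Function.Injective g ∧ sinf ≠ zinf ∧
        Tendsto (fun n => g n • z) atTop (𝓝 zinf) ∧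
        Tendsto (fun n => g n • s) atTop (𝓝 sinf) :=
  stmt16_general hZ hne z
end
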